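/- Let $q \ge 1$ be an integer, let $E \ge 0$, and let $\epsilon_{-q}, \dots, \epsilon_{q} \in \mathbb{C}$ satisfy $|\epsilon_n| \le E$ for all $n$. Then for every $t \in [-q, q]$, $\Big| \sum_{n=-q}^{q} \epsilon_n\, \mathrm{sinc}(t - n) \Big| \le E\Big(3 + \frac{2}{\pi}\log(2q)\Big)$. -/

import Mathlib

/-!
Bound the error by `E` times the ℓ¹ norm of the weights `sinc (t - n)`. Split the nodes at
`⌊t⌋`: on each side the `j`-th nearest node is at distance at least `j`, so, since
`|sinc x| ≤ min 1 (1 / (π |x|))`, each side contributes at most `1 + H / π` with `H` the harmonic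
number `H (2q) ≤ 1 + log (2q)`. The constant `2 + 2 / π` is then absorbed into `3`.
-/

open scoped Real

/-- Normalized cardinal sine: `sinc x = sin (π x) / (π x)` for `x ≠ 0`, `sinc 0 = 1`. -/
noncomputable def sinc (x : ℝ) : ℝ := if x = 0 then 1 else Real.sin (π * x) / (π * x)

lemma sinc_neg (x : ℝ) : sinc (-x) = sinc x := by
  unfold sinc
  split_ifs <;> simp_all [mul_neg, neg_div_neg_eq]

lemma abs_sinc_le_one (x : ℝ) : |sinc x| ≤ 1 := by
  unfold sinc
  split_ifs
  · simp
  · rw [abs_div]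
    exact div_le_one_of_le₀ Real.abs_sin_le_abs (abs_nonneg _)

lemma abs_sinc_le_of_le_abs {a x : ℝ} (ha : 0 < a) (hax : a ≤ |x|) : |sinc x| ≤ a⁻¹ / π := by
  have hx : x ≠ 0 := abs_pos.mp (ha.trans_le hax)
  rw [sinc, if_neg hx, abs_div, abs_mul, abs_of_pos Real.pi_pos]
  calc |Real.sin (π * x)| / (π * |x|) ≤ 1 / (π * a) :=
        div_le_div₀ zero_le_one (Real.abs_sin_le_one _) (by positivity) (by gcongr)
    _ = a⁻¹ / π := by field_simp

lemma harmonic_monotone : Monotone harmonic :=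
  monotone_nat_of_le_succ fun n => by rw [harmonic_succ]; exact le_add_of_nonneg_right (by positivity)

lemma sum_range_abs_sinc_add_le {x : ℝ} (hx : 0 ≤ x) (m : ℕ) :
    ∑ j ∈ Finset.range (m + 1), |sinc (x + j)| ≤ 1 + (harmonic m : ℝ) / π := by
  rw [Finset.sum_range_succ', harmonic, Rat.cast_sum, Finset.sum_div, add_comm]
  gcongr with j
  · exact abs_sinc_le_one _
  · push_cast
    exact abs_sinc_le_of_le_abs (by positivity) (by rw [abs_of_nonneg (by positivity)]; linarith)

lemma sum_range_abs_sinc_sub_le {N : ℕ} {s : ℝ} (h0 : 0 ≤ s) (hN : s ≤ N) :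
    ∑ i ∈ Finset.range (N + 1), |sinc (s - i)| ≤ 2 * (1 + (harmonic N : ℝ) / π) := by
  set k := ⌊s⌋₊
  have hkN : k ≤ N := Nat.floor_le_of_le hN
  have hks : (k : ℝ) ≤ s := Nat.floor_le h0
  have hsk : s < k + 1 := Nat.lt_floor_add_one s
  have hH : ∀ m ≤ N, 1 + (harmonic m : ℝ) / π ≤ 1 + (harmonic N : ℝ) / π := fun m hm => by
    gcongr; exact_mod_cast harmonic_monotone hm
  rw [← Finset.sum_range_add_sum_Ico _ (Nat.succ_le_succ hkN), two_mul]
  gcongr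
  · have hleft : ∑ i ∈ Finset.range (k + 1), |sinc (s - i)| =
        ∑ j ∈ Finset.range (k + 1), |sinc ((s - k) + j)| := by
      rw [← Finset.sum_range_reflect]
      refine Finset.sum_congr rfl fun j hj => ?_
      rw [Finset.mem_range] at hj
      rw [Nat.add_sub_cancel, Nat.cast_sub (by omega)]
      ring_nf
    rw [hleft]
    exact (sum_range_abs_sinc_add_le (by linarith) k).trans (hH k hkN)
  · have hright : ∑ i ∈ Finset.Ico (k + 1) (N + 1), |sinc (s - i)| =
        ∑ j ∈ Finset.range (N - k), |sinc ((k + 1 - s) + j)| := by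
      rw [Finset.sum_Ico_eq_sum_range, Nat.add_sub_add_right]
      refine Finset.sum_congr rfl fun j _ => ?_
      rw [← sinc_neg]
      push_cast
      ring_nf
    rw [hright]
    calc _ ≤ ∑ j ∈ Finset.range (N - k + 1), |sinc ((k + 1 - s) + j)| :=
          Finset.sum_le_sum_of_subset_of_nonneg (Finset.range_subset_range.mpr (by omega))
            fun _ _ _ => abs_nonneg _
      _ ≤ _ := (sum_range_abs_sinc_add_le (by linarith) _).trans (hH _ (by omega))

lemma sum_Icc_abs_sinc_sub_le (q : ℕ) {t : ℝ} (ht : t ∈ Set.Icc (-(q : ℝ)) q) :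
    ∑ n ∈ Finset.Icc (-(q : ℤ)) q, |sinc (t - n)| ≤ 3 + (2 / π) * Real.log (2 * q) := by
  have hshift : ∑ n ∈ Finset.Icc (-(q : ℤ)) q, |sinc (t - n)| =
      ∑ i ∈ Finset.range (2 * q + 1), |sinc ((t + q) - i)| := by
    rw [Int.Icc_eq_finset_map, Finset.sum_map, show ((q : ℤ) + 1 - -q).toNat = 2 * q + 1 by omega]
    refine Finset.sum_congr rfl fun i _ => ?_
    simp only [Function.Embedding.trans_apply, Nat.castEmbedding_apply, addLeftEmbedding_apply]
    push_cast
    ring_nf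
  have hH : (harmonic (2 * q) : ℝ) ≤ 1 + Real.log (2 * q) := by
    exact_mod_cast harmonic_le_one_add_log (2 * q)
  have hπ : 2 / π ≤ 1 := (div_le_one Real.pi_pos).mpr Real.two_le_pi
  rw [hshift]
  calc _ ≤ 2 * (1 + (harmonic (2 * q) : ℝ) / π) :=
        sum_range_abs_sinc_sub_le (by linarith [ht.1]) (by push_cast; linarith [ht.2])
    _ = 2 + (2 / π) * harmonic (2 * q) := by ring
    _ ≤ 2 + (2 / π) * (1 + Real.log (2 * q)) := by gcongr
    _ ≤ 3 + (2 / π) * Real.log (2 * q) := by linarith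

lemma norm_sum_mul_ofReal_le {ι 𝕜 : Type*} [RCLike 𝕜] (s : Finset ι) {ε : ι → 𝕜} {w : ι → ℝ}
    {E : ℝ} (hε : ∀ i ∈ s, ‖ε i‖ ≤ E) : ‖∑ i ∈ s, ε i * w i‖ ≤ E * ∑ i ∈ s, |w i| := by
  rw [Finset.mul_sum]
  refine (norm_sum_le _ _).trans (Finset.sum_le_sum fun i hi => ?_)
  rw [norm_mul, RCLike.norm_ofReal]
  exact mul_le_mul_of_nonneg_right (hε i hi) (abs_nonneg _)

theorem sinc_uncertainty_propagation_general
    (q : ℕ) (E : ℝ) (hE : 0 ≤ E)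
    (ε : ℤ → ℂ) (hε : ∀ n ∈ Finset.Icc (-(q : ℤ)) (q : ℤ), ‖ε n‖ ≤ E)
    (t : ℝ) (ht : t ∈ Set.Icc (-(q : ℝ)) (q : ℝ)) :
    ‖∑ n ∈ Finset.Icc (-(q : ℤ)) (q : ℤ),
        ε n * ((sinc (t - (n : ℝ)) : ℝ) : ℂ)‖ ≤
      E * (3 + (2 / π) * Real.log (2 * (q : ℝ))) :=
  (norm_sum_mul_ofReal_le _ hε).trans
    (mul_le_mul_of_nonneg_left (sum_Icc_abs_sinc_sub_le q ht) hE)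

/-- Uncertainty propagation through cardinal sine interpolation: if the error vector
`ε` satisfies `|ε n| ≤ E` for `-q ≤ n ≤ q`, then the propagated error at any
`t ∈ [-q, q]` is at most `E (3 + (2/π) log(2q))`. -/
theorem sinc_uncertainty_propagation
    (q : ℕ) (hq : 1 ≤ q) (E : ℝ) (hE : 0 ≤ E)
    (ε : ℤ → ℂ) (hε : ∀ n ∈ Finset.Icc (-(q : ℤ)) (q : ℤ), ‖ε n‖ ≤ E)
    (t : ℝ) (ht : t ∈ Set.Icc (-(q : ℝ)) (q : ℝ)) :
    ‖∑ n ∈ Finset.Icc (-(q : ℤ)) (q : ℤ),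
        ε n * ((sinc (t - (n : ℝ)) : ℝ) : ℂ)‖ ≤
      E * (3 + (2 / π) * Real.log (2 * (q : ℝ))) :=
  sinc_uncertainty_propagation_general q E hE ε hε t ht
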